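/- Let P be a poset and for each p ∈ P let Q_p be a poset. Let Σ_P Q_p denote the lexicographic sum: the set {(p,q) : p ∈ P, q ∈ Q_p} ordered by (p,q) ≤ (p',q') if and only if p <_P p', or p = p' and q ≤_{Q_p} q'. Then dim(Σ_P Q_p) equals the supremum of the set {dim(P)} ∪ {dim(Q_p) : p ∈ P}. -/

import Mathlib

universe u

/-- The order dimension of a poset: the least cardinal `κ` such that the partial
order is the intersection of `κ` linear orderings (each extending it). -/
noncomputable def orderDim (α : Type u) [PartialOrder α] : Cardinal.{u} :=
  sInf {κ : Cardinal.{u} | ∃ (ι : Type u) (r : ι → α → α → Prop),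
    (∀ i, IsLinearOrder α (r i)) ∧
    (∀ x y : α, x ≤ y ↔ ∀ i, r i x y) ∧
    Cardinal.mk ι = κ}

/-!
Realizers of `P` and of every `Q p`, all indexed by one type of cardinality the supremum (possible
once they are padded with further linear extensions), combine coordinatewise into a realizer of
`Σₗ p, Q p`: the `i`-th linear order compares elements of different fibres by the `i`-th order on
`P`, and elements of one fibre by the `i`-th order on that fibre. Conversely `P` (through a section)
and every `Q p` (as a fibre) embed in the lexicographic sum, and dimension is monotone under
embeddings.
-/

open Function Cardinal

structure IsRealizer {α ι : Type*} [PartialOrder α] (r : ι → α → α → Prop) : Prop where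
  isLinearOrder : ∀ i, IsLinearOrder α (r i)
  le_iff : ∀ x y, x ≤ y ↔ ∀ i, r i x y

section Realizer

variable {α β ι : Type*} [PartialOrder α]

theorem exists_linearExtension_not_rel {x y : α} (hxy : ¬x ≤ y) :
    ∃ s : α → α → Prop, IsLinearOrder α s ∧ (∀ a b, a ≤ b → s a b) ∧ ¬s x y := by
  -- adjoining `y ≺ x` to `≤` keeps it a partial order precisely because `¬ x ≤ y`
  let r : α → α → Prop := fun a b => a ≤ b ∨ (a ≤ y ∧ x ≤ b)
  have : IsPartialOrder α r :=
    { refl := fun a => Or.inl le_rfl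
      trans := by
        rintro a b c (hab | ⟨hay, hxb⟩) (hbc | ⟨hby, hxc⟩)
        exacts [Or.inl (hab.trans hbc), Or.inr ⟨hab.trans hby, hxc⟩,
          Or.inr ⟨hay, hxb.trans hbc⟩, Or.inr ⟨hay, hxc⟩]
      antisymm := by
        rintro a b (hab | ⟨hay, hxb⟩) (hba | ⟨hby, hxa⟩)
        exacts [le_antisymm hab hba, absurd ((hxa.trans hab).trans hby) hxy,
          absurd ((hxb.trans hba).trans hay) hxy, absurd (hxa.trans hay) hxy] }
  obtain ⟨s, hs, hrs⟩ := extend_partialOrder r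
  refine ⟨s, hs, fun a b hab => hrs a b (Or.inl hab), fun hsxy => hxy ?_⟩
  have hsyx : s y x := hrs y x (Or.inr ⟨le_rfl, le_rfl⟩)
  exact (antisymm hsxy hsyx).le

theorem isRealizer_linearExtensions :
    IsRealizer (Subtype.val :
      {s : α → α → Prop // IsLinearOrder α s ∧ ∀ a b, a ≤ b → s a b} → α → α → Prop) where
  isLinearOrder s := s.2.1
  le_iff x y := by
    refine ⟨fun h s => s.2.2 x y h, fun h => by_contra fun hxy => ?_⟩
    obtain ⟨s, hs, hle, hn⟩ := exists_linearExtension_not_rel hxy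
    exact hn (h ⟨s, hs, hle⟩)

theorem IsRealizer.extend {ι₀ : Type*} {r : ι₀ → α → α → Prop} (hr : IsRealizer r)
    {f : ι₀ → ι} (hf : Injective f) {s : α → α → Prop} (hs : IsLinearOrder α s)
    (hle : ∀ a b, a ≤ b → s a b) : IsRealizer (extend f r fun _ => s) where
  isLinearOrder i := by
    by_cases hi : ∃ j, f j = i
    · obtain ⟨j, rfl⟩ := hi
      rw [hf.extend_apply]
      exact hr.isLinearOrder j
    · rwa [extend_apply' _ _ _ hi]
  le_iff x y := by
    refine ⟨fun h i => ?_, fun h => (hr.le_iff x y).2 fun j => ?_⟩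
    · by_cases hi : ∃ j, f j = i
      · obtain ⟨j, rfl⟩ := hi
        rw [hf.extend_apply]
        exact (hr.le_iff x y).1 h j
      · rw [extend_apply' _ _ _ hi]
        exact hle x y h
    · simpa only [hf.extend_apply] using h (f j)

theorem IsRealizer.comap [PartialOrder β] {r : ι → β → β → Prop} (hr : IsRealizer r)
    (f : α ↪o β) : IsRealizer fun i => f ⁻¹'o r i where
  isLinearOrder i :=
    have := hr.isLinearOrder i
    (RelEmbedding.preimage f.toEmbedding (r i)).isLinearOrder
  le_iff x y := by rw [← f.le_iff_le, hr.le_iff]; rfl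

end Realizer

section OrderDim

variable {α β : Type u} [PartialOrder α] [PartialOrder β]

theorem orderDim_le_mk {ι : Type u} {r : ι → α → α → Prop} (hr : IsRealizer r) :
    orderDim α ≤ #ι :=
  csInf_le' ⟨ι, r, hr.isLinearOrder, hr.le_iff, rfl⟩

theorem exists_isRealizer_mk_eq_orderDim (α : Type u) [PartialOrder α] :
    ∃ (ι : Type u) (r : ι → α → α → Prop), IsRealizer r ∧ #ι = orderDim α := by
  obtain ⟨ι, r, hlin, hle, hι⟩ : orderDim α ∈ _ := csInf_mem
    ⟨_, _, _, isRealizer_linearExtensions.isLinearOrder, isRealizer_linearExtensions.le_iff, rfl⟩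
  exact ⟨ι, r, ⟨hlin, hle⟩, hι⟩

theorem exists_isRealizer_of_orderDim_le {ι : Type u} (h : orderDim α ≤ #ι) :
    ∃ r : ι → α → α → Prop, IsRealizer r := by
  obtain ⟨ι₀, r, hr, hι₀⟩ := exists_isRealizer_mk_eq_orderDim α
  obtain ⟨f⟩ := (Cardinal.le_def ι₀ ι).1 (hι₀.trans_le h)
  obtain ⟨s, hs, hle⟩ := extend_partialOrder ((· ≤ ·) : α → α → Prop)
  exact ⟨_, hr.extend f.injective hs hle⟩

theorem OrderEmbedding.orderDim_le (f : α ↪o β) : orderDim α ≤ orderDim β := by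
  obtain ⟨ι, r, hr, hι⟩ := exists_isRealizer_mk_eq_orderDim β
  exact hι ▸ orderDim_le_mk (hr.comap f)

end OrderDim

section LexSum

variable {ι : Type*} {κ : ι → Type*}

theorem isStrictTotalOrder_not_swap (r : ι → ι → Prop) [IsLinearOrder ι r] :
    IsStrictTotalOrder ι fun i j => ¬r j i where
  trichotomous _ _ hij hji := antisymm (of_not_not hji) (of_not_not hij)
  irrefl i h := h (refl i)
  trans i j _ hji hkj hki := hkj (_root_.trans hki (total_of r i j |>.resolve_right hji))

theorem isLinearOrder_sigmaLex (r : ι → ι → Prop) (s : ∀ i, κ i → κ i → Prop)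
    [IsLinearOrder ι r] [∀ i, IsLinearOrder (κ i) (s i)] :
    IsLinearOrder (Σ i, κ i) (Sigma.Lex (fun i j => ¬r j i) s) :=
  have := isStrictTotalOrder_not_swap r
  {}

theorem IsRealizer.le_iff_forall_not_rel {α : Type*} [PartialOrder α] {r : ι → α → α → Prop}
    (hr : IsRealizer r) {x y : α} (hxy : x ≠ y) : x ≤ y ↔ ∀ i, ¬r i y x := by
  rw [hr.le_iff]
  refine forall_congr' fun i => ?_
  have := hr.isLinearOrder i
  exact ⟨fun h h' => hxy (antisymm h h'), (total_of (r i) x y).resolve_right⟩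

theorem IsRealizer.sigmaLex [PartialOrder ι] [∀ i, PartialOrder (κ i)] {τ : Type*}
    {r : τ → ι → ι → Prop} {s : ∀ i, τ → κ i → κ i → Prop} (hr : IsRealizer r)
    (hs : ∀ i, IsRealizer (s i)) :
    IsRealizer fun t (a b : Σₗ i, κ i) =>
      Sigma.Lex (fun i j => ¬r t j i) (fun i => s i t) a b where
  isLinearOrder t :=
    have := hr.isLinearOrder t
    have := fun i => (hs i).isLinearOrder t
    isLinearOrder_sigmaLex _ _
  le_iff := by
    intro x y
    rw [Sigma.Lex.le_def]
    obtain ⟨i, a⟩ := x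
    obtain ⟨j, b⟩ := y
    dsimp only
    by_cases hij : i = j
    · subst hij
      have := hr.isLinearOrder
      simp [Sigma.lex_iff, (hs i).le_iff, refl]
    · simp [Sigma.lex_iff, hij, hr.le_iff_forall_not_rel hij, lt_iff_le_and_ne]

end LexSum

section Embeddings

variable {ι : Type*} {κ : ι → Type*} [∀ i, PartialOrder (κ i)]

def Sigma.Lex.fiberEmbedding [Preorder ι] (i : ι) : κ i ↪o Σₗ i, κ i :=
  OrderEmbedding.ofMapLEIff (fun a => toLex ⟨i, a⟩) fun a b =>
    (Sigma.lex_iff (a := ⟨i, a⟩) (b := ⟨i, b⟩)).trans (by simp)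

def Sigma.Lex.sectionEmbedding [PartialOrder ι] (f : ∀ i, κ i) : ι ↪o Σₗ i, κ i :=
  OrderEmbedding.ofMapLEIff (fun i => toLex ⟨i, f i⟩) fun i j => by
    refine (Sigma.lex_iff (a := ⟨i, f i⟩) (b := ⟨j, f j⟩)).trans (le_iff_lt_or_eq.trans ?_).symm
    exact or_congr_right ⟨fun h => ⟨h, by subst h; rfl⟩, fun ⟨h, _⟩ => h⟩

end Embeddings

theorem orderDim_sigmaLex_le {P : Type u} {Q : P → Type u} [PartialOrder P]
    [∀ p, PartialOrder (Q p)] {c : Cardinal.{u}} (hP : orderDim P ≤ c)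
    (hQ : ∀ p, orderDim (Q p) ≤ c) : orderDim (Σₗ p, Q p) ≤ c := by
  obtain ⟨r, hr⟩ := exists_isRealizer_of_orderDim_le (hP.trans_eq (mk_out c).symm)
  choose s hs using fun p => exists_isRealizer_of_orderDim_le ((hQ p).trans_eq (mk_out c).symm)
  exact mk_out c ▸ orderDim_le_mk (hr.sigmaLex hs)

theorem stmt12_general (P : Type u) [PartialOrder P]
    (Q : P → Type u) [∀ p, PartialOrder (Q p)] [∀ p, Nonempty (Q p)] :
    orderDim (Σₗ p, Q p) =
      sSup (insert (orderDim P) (Set.range fun p => orderDim (Q p))) := by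
  have hbdd : BddAbove (insert (orderDim P) (Set.range fun p => orderDim (Q p))) :=
    bddAbove_of_small
  refine le_antisymm (orderDim_sigmaLex_le (le_csSup hbdd (Set.mem_insert _ _))
    fun p => le_csSup hbdd (Set.mem_insert_of_mem _ ⟨p, rfl⟩)) ?_
  refine csSup_le (Set.insert_nonempty _ _) ?_
  rintro _ (rfl | ⟨p, rfl⟩)
  · exact (Sigma.Lex.sectionEmbedding fun p => Classical.arbitrary (Q p)).orderDim_le
  · exact (Sigma.Lex.fiberEmbedding p).orderDim_le

theorem stmt12 (P : Type u) [PartialOrder P] [Nonempty P]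
    (Q : P → Type u) [∀ p, PartialOrder (Q p)] [∀ p, Nonempty (Q p)] :
    orderDim (Σₗ p, Q p) =
      sSup (insert (orderDim P) (Set.range fun p => orderDim (Q p))) :=
  stmt12_general P Q
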